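/- arXiv:1908.04819 — 2 statements merged into one kernel-verified Lean document; each statement's English description precedes it below -/
import Mathlib

section
/- Let $R$ be a reduced Noetherian commutative ring, and let $M$ and $N$ be finitely generated $R$-modules such that $M_\mathfrak{p} \cong N_\mathfrak{p}$ for every minimal prime $\mathfrak{p}$ of $R$. Then there exists an element $c \in R$ not contained in any minimal prime of $R$, together with $R$-linear maps $\varphi: M \to N$ and $\psi: N \to M$, such that the cokernels of $\varphi$ and $\psi$ are both annihilated after localization at $c$ (i.e., $(\operatorname{coker}\varphi)_c = 0$ and $(\operatorname{coker}\psi)_c = 0$). -/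
/-!
A map `f : M → N` whose cokernel has an annihilator not contained in a prime `p` is surjective
after localizing at `p`. Since `M` is finitely presented, an isomorphism `M_p ≃ N_p` lifts, up to a
unit of `R_p`, to such a map `f_p`. In a reduced ring with finitely many minimal primes one can pick
`a_p ∉ p` with `a_p a_q = 0` for `p ≠ q`, and then `∑ a_q f_q` is good at every minimal prime
simultaneously. Prime avoidance gives one `c` annihilating both cokernels and lying outside all
minimal primes.
-/

section

variable {R : Type*} [CommRing R]

theorem Ideal.exists_mem_forall_notMem_of_not_le {s : Set (Ideal R)} (hs : s.Finite)
    (hprime : ∀ p ∈ s, p.IsPrime) {J : Ideal R} (hJ : ∀ p ∈ s, ¬J ≤ p) :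
    ∃ c ∈ J, ∀ p ∈ s, c ∉ p := by
  by_contra! h
  obtain ⟨p, hp, hJp⟩ := (Ideal.subset_union_prime_finite hs (f := id) ⊥ ⊥
    fun p hp _ _ => hprime p hp).mp fun c hc => by
    obtain ⟨p, hp, hcp⟩ := h c hc
    exact Set.mem_biUnion hp hcp
  exact hJ p hp hJp

theorem Submodule.mem_annihilator_quotient_iff {N : Type*} [AddCommGroup N] [Module R N]
    {P : Submodule R N} {r : R} :
    r ∈ Module.annihilator R (N ⧸ P) ↔ ∀ y : N, r • y ∈ P := by
  simp [Submodule.annihilator_quotient, Submodule.mem_colon]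

theorem LocalizedModule.subsingleton_of_mem_annihilator {Q : Type*} [AddCommGroup Q] [Module R Q]
    {c : R} (hc : c ∈ Module.annihilator R Q) :
    Subsingleton (LocalizedModule (Submonoid.powers c) Q) :=
  LocalizedModule.subsingleton_iff.mpr fun q =>
    ⟨c, Submonoid.mem_powers c, Module.mem_annihilator.mp hc q⟩

theorem Module.annihilator_not_le_of_subsingleton {Q : Type*} [AddCommGroup Q] [Module R Q]
    [Module.Finite R Q] (p : Ideal R) [hp : p.IsPrime]
    [h : Subsingleton (LocalizedModule p.primeCompl Q)] : ¬Module.annihilator R Q ≤ p :=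
  fun hle => (Module.notMem_support_iff (p := ⟨p, hp⟩)).mpr h
    (Module.mem_support_iff_of_finite.mpr hle)

theorem exists_localizedMap_surjective_of_linearEquiv {M N : Type*} [AddCommGroup M] [Module R M]
    [AddCommGroup N] [Module R N] [Module.FinitePresentation R M] (S : Submonoid R)
    (e : LocalizedModule S M ≃ₗ[Localization S] LocalizedModule S N) :
    ∃ f : M →ₗ[R] N, Function.Surjective (LocalizedModule.map S f) := by
  obtain ⟨f, s, hf⟩ := Module.FinitePresentation.exists_lift_of_isLocalizedModule S
    (LocalizedModule.mkLinearMap S N) (e.restrictScalars R ∘ₗ LocalizedModule.mkLinearMap S M)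
  have hmap : LocalizedModule.map S f = algebraMap R (Localization S) s • e.toLinearMap := by
    apply LinearMap.restrictScalars_injective R
    apply IsLocalizedModule.ext S (LocalizedModule.mkLinearMap S M)
      (IsLocalizedModule.map_units (LocalizedModule.mkLinearMap S N))
    ext m
    simpa [Submonoid.smul_def] using LinearMap.congr_fun hf m
  obtain ⟨u, hu⟩ := IsLocalization.map_units (Localization S) s
  refine ⟨f, fun z => ⟨e.symm (u⁻¹ • z), ?_⟩⟩
  rw [hmap, LinearMap.smul_apply, LinearEquiv.coe_coe, LinearEquiv.apply_symm_apply, ← hu,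
    ← Units.smul_def, smul_inv_smul]

theorem exists_linearMap_annihilator_not_le_of_linearEquiv {M N : Type*} [AddCommGroup M]
    [Module R M] [AddCommGroup N] [Module R N] [Module.FinitePresentation R M] [Module.Finite R N]
    (p : Ideal R) [p.IsPrime]
    (e : LocalizedModule p.primeCompl M ≃ₗ[Localization p.primeCompl]
      LocalizedModule p.primeCompl N) :
    ∃ f : M →ₗ[R] N, ¬Module.annihilator R (N ⧸ LinearMap.range f) ≤ p := by
  obtain ⟨f, hf⟩ := exists_localizedMap_surjective_of_linearEquiv p.primeCompl e
  have := (f.localizedMap_surjective_iff_subsingleton_localized_coker p.primeCompl).mp hf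
  exact ⟨f, Module.annihilator_not_le_of_subsingleton p⟩

theorem eq_zero_of_forall_mem_minimalPrimes [IsReduced R] {x : R}
    (hx : ∀ p ∈ minimalPrimes R, x ∈ p) : x = 0 := by
  obtain ⟨n, hn⟩ : x ∈ (⊥ : Ideal R).radical := by
    rw [← Ideal.sInf_minimalPrimes]
    exact Submodule.mem_sInf.mpr hx
  exact IsReduced.eq_zero x ⟨n, (Submodule.mem_bot R).mp hn⟩

theorem exists_notMem_forall_mem_minimalPrimes_ne (hfin : (minimalPrimes R).Finite)
    {p : Ideal R} (hp : p ∈ minimalPrimes R) :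
    ∃ a ∉ p, ∀ q ∈ minimalPrimes R, q ≠ p → a ∈ q := by
  classical
  have hinf : ¬(hfin.toFinset.erase p).inf id ≤ p := by
    rw [(IsMinimalPrime.isPrime hp).inf_le']
    rintro ⟨q, hq, hqp⟩
    rw [Finset.mem_erase, Set.Finite.mem_toFinset] at hq
    exact hq.1 (le_antisymm hqp (hp.2 ⟨IsMinimalPrime.isPrime hq.2, bot_le⟩ hqp))
  obtain ⟨a, ha, hap⟩ := SetLike.not_le_iff_exists.mp hinf
  refine ⟨a, hap, fun q hq hqp => ?_⟩
  exact Submodule.mem_finsetInf.mp ha q (by simp [hq, hqp])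

theorem exists_orthogonal_notMem_minimalPrimes [IsReduced R] (hfin : (minimalPrimes R).Finite) :
    ∃ a : Ideal R → R, (∀ p ∈ minimalPrimes R, a p ∉ p) ∧
      ∀ p ∈ minimalPrimes R, ∀ q ∈ minimalPrimes R, p ≠ q → a p * a q = 0 := by
  choose! a hap haq using fun p (hp : p ∈ minimalPrimes R) =>
    exists_notMem_forall_mem_minimalPrimes_ne hfin hp
  refine ⟨a, hap, fun p hp q hq hpq => eq_zero_of_forall_mem_minimalPrimes fun r hr => ?_⟩
  by_cases hrp : r = p
  · subst hrp
    exact Ideal.mul_mem_left _ _ (haq q hq r hr hpq)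
  · exact Ideal.mul_mem_right _ _ (haq p hp r hr hrp)

theorem exists_linearMap_annihilator_not_le_minimalPrimes [IsReduced R] {M N : Type*}
    [AddCommGroup M] [Module R M] [AddCommGroup N] [Module R N] (hfin : (minimalPrimes R).Finite)
    (hf : ∀ p ∈ minimalPrimes R,
      ∃ f : M →ₗ[R] N, ¬Module.annihilator R (N ⧸ LinearMap.range f) ≤ p) :
    ∃ φ : M →ₗ[R] N, ∀ p ∈ minimalPrimes R,
      ¬Module.annihilator R (N ⧸ LinearMap.range φ) ≤ p := by
  classical
  choose! f hf using hf
  obtain ⟨a, hap, horth⟩ := exists_orthogonal_notMem_minimalPrimes hfin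
  refine ⟨∑ q ∈ hfin.toFinset, a q • f q, fun p hp hle => ?_⟩
  have hφ : ∀ m, (∑ q ∈ hfin.toFinset, a q • f q) (a p • m) = a p • a p • f p m := by
    intro m
    rw [LinearMap.sum_apply, Finset.sum_eq_single p]
    · simp only [LinearMap.smul_apply, map_smul]
    · intro q hq hqp
      rw [LinearMap.smul_apply, map_smul, smul_smul, horth q (hfin.mem_toFinset.mp hq) p hp hqp,
        zero_smul]
    · exact fun hp' => absurd (hfin.mem_toFinset.mpr hp) hp'
  obtain ⟨s, hs, hsp⟩ := SetLike.not_le_iff_exists.mp (hf p hp)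
  have hmem : a p * a p * s ∈ Module.annihilator R (N ⧸ LinearMap.range
      (∑ q ∈ hfin.toFinset, a q • f q)) := by
    rw [Submodule.mem_annihilator_quotient_iff] at hs ⊢
    intro y
    obtain ⟨m, hm⟩ := hs y
    exact ⟨a p • m, by rw [hφ, hm, mul_smul, mul_smul]⟩
  have hprime := IsMinimalPrime.isPrime hp
  exact hprime.mul_notMem (hprime.mul_notMem (hap p hp) (hap p hp)) hsp (hle hmem)

end

/-- Let `R` be a reduced Noetherian ring and `M`, `N` finitely generated `R`-modules that
become isomorphic after localization at every minimal prime of `R`.  Then there is an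
element `c` outside every minimal prime and `R`-linear maps `φ : M → N`, `ψ : N → M`
whose cokernels vanish after localizing at `c`. -/
theorem stmt1 {R : Type*} [CommRing R] [IsNoetherianRing R] [IsReduced R]
    (M N : Type*) [AddCommGroup M] [Module R M] [AddCommGroup N] [Module R N]
    [Module.Finite R M] [Module.Finite R N]
    (hiso : ∀ (p : Ideal R) (hp : p.IsPrime), p ∈ minimalPrimes R →
      Nonempty (LocalizedModule p.primeCompl M ≃ₗ[Localization p.primeCompl]
        LocalizedModule p.primeCompl N)) :
    ∃ c : R, (∀ p ∈ minimalPrimes R, c ∉ p) ∧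
      ∃ (φ : M →ₗ[R] N) (ψ : N →ₗ[R] M),
        Subsingleton (LocalizedModule (Submonoid.powers c) (N ⧸ LinearMap.range φ)) ∧
        Subsingleton (LocalizedModule (Submonoid.powers c) (M ⧸ LinearMap.range ψ)) := by
  have hfin := minimalPrimes.finite_of_isNoetherianRing R
  have := Module.finitePresentation_of_finite R M
  have := Module.finitePresentation_of_finite R N
  obtain ⟨φ, hφ⟩ := exists_linearMap_annihilator_not_le_minimalPrimes hfin fun p hp =>
    have := IsMinimalPrime.isPrime hp
    exists_linearMap_annihilator_not_le_of_linearEquiv p (hiso p this hp).some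
  obtain ⟨ψ, hψ⟩ := exists_linearMap_annihilator_not_le_minimalPrimes hfin fun p hp =>
    have := IsMinimalPrime.isPrime hp
    exists_linearMap_annihilator_not_le_of_linearEquiv p (hiso p this hp).some.symm
  obtain ⟨c, ⟨hcφ, hcψ⟩, hc⟩ := Ideal.exists_mem_forall_notMem_of_not_le hfin
    (fun p hp => IsMinimalPrime.isPrime hp) fun p hp hle =>
      ((IsMinimalPrime.isPrime hp).inf_le.mp hle).elim (hφ p hp) (hψ p hp)
  exact ⟨c, hc, φ, ψ, LocalizedModule.subsingleton_of_mem_annihilator hcφ,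
    LocalizedModule.subsingleton_of_mem_annihilator hcψ⟩
end

section
/- Let $A \to R$ be a flat ring homomorphism of Noetherian $F$-finite rings of prime characteristic $p > 0$, where $A$ is a domain with fraction field $K$ such that $[K^{1/p}:K]$ is finite. Then for any minimal prime ideal $\mathfrak{q}$ of $R$, the localization $(R \otimes_A A^{1/p})_{\mathfrak{q}}$ is a free module over $R_{\mathfrak{q}}$ of rank $[K^{1/p}:K]$. -/
open Module IsLocalRing

section Frob

/-- `F^e_* M`: the abelian group `M` with `R`-module structure restricted along the
`e`-th iterated Frobenius of `R`. -/
def FrobMod (p e : ℕ) (R M : Type*) : Type _ := M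

instance FrobMod.addCommGroup {p e : ℕ} {R M : Type*} [AddCommGroup M] :
    AddCommGroup (FrobMod p e R M) :=
  inferInstanceAs (AddCommGroup M)

noncomputable instance FrobMod.module {p e : ℕ} {R M : Type*} [CommRing R] [ExpChar R p]
    [AddCommGroup M] [Module R M] : Module R (FrobMod p e R M) :=
  Module.compHom M (iterateFrobenius R p e)

/-- `F^e_* B` (a.k.a. `B^{1/p^e}`) as a ring. -/
def FrobAlg (p e : ℕ) (B : Type*) : Type _ := B

instance FrobAlg.commRing {p e : ℕ} {B : Type*} [CommRing B] : CommRing (FrobAlg p e B) :=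
  inferInstanceAs (CommRing B)

/-- If `B` is an `A`-algebra, then `F^e_* B` is an `A`-algebra via `A → B` composed with
the `e`-th iterated Frobenius of `B`. -/
noncomputable instance FrobAlg.algebra {p e : ℕ} {A B : Type*} [CommRing A] [CommRing B]
    [Algebra A B] [ExpChar B p] : Algebra A (FrobAlg p e B) :=
  ((iterateFrobenius B p e).comp (algebraMap A B)).toAlgebra

/-- The `p`-degree `[k^{1/p^e} : k]` of a ring `k` of characteristic `p`. -/
noncomputable def pDeg (p e : ℕ) (k : Type*) [CommRing k] [ExpChar k p] : ℕ :=
  Module.finrank k (FrobAlg p e k)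

/-- The length of an `R`-module `M`, as the Krull dimension of its submodule lattice. -/
noncomputable def modLength (R M : Type*) [CommRing R] [AddCommGroup M] [Module R M] :
    WithBot ℕ∞ :=
  Order.krullDim (Submodule R M)

/-- The minimal number of generators of an `R`-module `M`. -/
noncomputable def minGens (R M : Type*) [CommRing R] [AddCommGroup M] [Module R M] : ℕ :=
  sInf {n : ℕ | ∃ s : Finset M, s.card = n ∧ Submodule.span R (s : Set M) = ⊤}

/-- The bracket power `I^{[p^e]}`. -/
noncomputable def bracketPow {R : Type*} [CommRing R] (p e : ℕ) [ExpChar R p] (I : Ideal R) :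
    Ideal R :=
  I.map (iterateFrobenius R p e)

end Frob

/-! Flatness of `A → R` keeps nonzerodivisors of `A` regular on `R`, so they avoid the minimal
prime `𝔮` and `A → R_𝔮` factors through `K`. Since `F_*` commutes with localization,
`K ⊗_A A^{1/p} = K^{1/p}`. Hence
`(R ⊗_A A^{1/p})_𝔮 ≅ R_𝔮 ⊗_A A^{1/p} ≅ R_𝔮 ⊗_K K^{1/p}`, which is free over `R_𝔮` of rank
`[K^{1/p} : K]`. -/

open TensorProduct nonZeroDivisors

theorem isUnit_algebraMap_atPrime_of_flat_of_mem_minimalPrimes {A R : Type*} [CommRing A]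
    [CommRing R] [Algebra A R] [Module.Flat A R] {q : Ideal R} [q.IsPrime]
    (hq : q ∈ minimalPrimes R) {a : A} (ha : a ∈ A⁰) :
    IsUnit (algebraMap A (Localization.AtPrime q) a) := by
  have hreg : algebraMap A R a ∈ R⁰ := by
    rw [← isRegular_iff_mem_nonZeroDivisors] at ha ⊢
    exact isLeftRegular_iff_isRegular.mp (IsSMulRegular.of_flat ha.left)
  rw [IsScalarTower.algebraMap_apply A R]
  exact IsLocalization.map_units _ (⟨_, fun h => Set.disjoint_left.mp
    (Ideal.disjoint_nonZeroDivisors_of_mem_minimalPrimes hq) h hreg⟩ : q.primeCompl)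

namespace FrobAlg

variable (p e : ℕ) (A B : Type*) [CommRing A] [CommRing B] [Algebra A B] [ExpChar A p]
  [ExpChar B p]

instance : IsScalarTower A B (FrobAlg p e B) :=
  .of_algebraMap_eq fun _ => rfl

noncomputable def map : FrobAlg p e A →ₐ[A] FrobAlg p e B where
  toRingHom := algebraMap A B
  commutes' a := map_pow (algebraMap A B) a (p ^ e)

theorem isLocalizedModule_map (S : Submonoid A) [IsLocalization S B] :
    IsLocalizedModule S (map p e A B).toLinearMap := by
  -- As a map of rings `F^e_* A → F^e_* B` is `A → B`, and the image of `S` in `F^e_* A` is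
  -- `S^{p^e}`, which has the same localization as `S`.
  let _ : Algebra (FrobAlg p e A) (FrobAlg p e B) := ‹Algebra A B›
  have : IsScalarTower A (FrobAlg p e A) (FrobAlg p e B) :=
    IsScalarTower.of_algebraMap_eq fun a => ((map p e A B).commutes a).symm
  rw [show map p e A B = IsScalarTower.toAlgHom A _ _ from rfl,
    isLocalizedModule_iff_isLocalization]
  have hpow : @IsLocalization A _ (Algebra.algebraMapSubmonoid (FrobAlg p e A) S) B _ _ := by
    refine (IsLocalization.iff_of_le_of_exists_dvd _ S ?_ ?_).mpr ‹_›
    · rintro _ ⟨s, hs, rfl⟩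
      exact S.pow_mem hs _
    · intro s hs
      exact ⟨_, ⟨s, hs, rfl⟩, dvd_pow_self s (pow_ne_zero e (expChar_ne_zero A p))⟩
  exact hpow

end FrobAlg

theorem IsBaseChange.free_and_finrank_eq_of_isScalarTower {A K S N V W : Type*} [CommRing A]
    [Field K] [CommRing S] [Nontrivial S] [Algebra A K] [Algebra K S] [Algebra A S]
    [IsScalarTower A K S] [AddCommGroup N] [Module A N] [AddCommGroup V] [Module A V] [Module K V]
    [IsScalarTower A K V] [AddCommGroup W] [Module A W] [Module S W] [IsScalarTower A S W]
    {f : N →ₗ[A] V} (hf : IsBaseChange K f) {g : N →ₗ[A] W} (hg : IsBaseChange S g) :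
    Module.Free S W ∧ Module.finrank S W = Module.finrank K V := by
  let e : W ≃ₗ[S] S ⊗[K] V :=
    hg.equiv.symm ≪≫ₗ (hf.comp (TensorProduct.isBaseChange K V S)).equiv
  exact ⟨.of_equiv e.symm, e.finrank_eq.trans Module.finrank_baseChange⟩

theorem stmt7_general (p : ℕ) [Fact p.Prime] (A R : Type*) [CommRing A] [CommRing R] [CharP A p]
    [IsDomain A] [CharP (FractionRing A) p] [Algebra A R] [Module.Flat A R]
    (q : Ideal R) [q.IsPrime] (hq : q ∈ minimalPrimes R) :
    Module.Free (Localization q.primeCompl)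
        (LocalizedModule q.primeCompl (TensorProduct A R (FrobAlg p 1 A))) ∧
      Module.finrank (Localization q.primeCompl)
          (LocalizedModule q.primeCompl (TensorProduct A R (FrobAlg p 1 A))) =
        pDeg p 1 (FractionRing A) := by
  let K := FractionRing A
  let Rq := Localization.AtPrime q
  have hunit : ∀ a : A⁰, IsUnit (algebraMap A Rq a) := fun a =>
    isUnit_algebraMap_atPrime_of_flat_of_mem_minimalPrimes hq a.2
  let _ : Algebra K Rq := (IsLocalization.lift hunit).toAlgebra
  have : IsScalarTower A K Rq :=
    .of_algebraMap_eq fun a => (IsLocalization.lift_eq hunit a).symm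
  have hK : IsBaseChange K (FrobAlg.map p 1 A K).toLinearMap :=
    have := FrobAlg.isLocalizedModule_map p 1 A K A⁰
    IsLocalizedModule.isBaseChange A⁰ K _
  have hRq : IsBaseChange Rq
      (((LocalizedModule.mkLinearMap q.primeCompl _).restrictScalars A).comp
        (TensorProduct.mk A R (FrobAlg p 1 A) 1)) :=
    (TensorProduct.isBaseChange A _ R).comp
      (IsLocalizedModule.isBaseChange q.primeCompl Rq (LocalizedModule.mkLinearMap _ _))
  exact hK.free_and_finrank_eq_of_isScalarTower hRq

/-- Let `A → R` be a flat map of Noetherian `F`-finite rings of characteristic `p > 0`,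
with `A` a domain with fraction field `K` such that `[K^{1/p} : K]` is finite.  Then for
any minimal prime `𝔮` of `R`, the localization `(R ⊗_A A^{1/p})_𝔮` is free over `R_𝔮` of
rank `[K^{1/p} : K]`. -/
theorem stmt7 (p : ℕ) [Fact p.Prime] (A R : Type*) [CommRing A] [CommRing R]
    [IsNoetherianRing A] [IsNoetherianRing R] [CharP A p] [CharP R p]
    [IsDomain A] [CharP (FractionRing A) p]
    [Module.Finite A (FrobAlg p 1 A)] [Module.Finite R (FrobAlg p 1 R)]
    [Module.Finite (FractionRing A) (FrobAlg p 1 (FractionRing A))]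
    [Algebra A R] [Module.Flat A R]
    (q : Ideal R) [q.IsPrime] (hq : q ∈ minimalPrimes R) :
    Module.Free (Localization q.primeCompl)
        (LocalizedModule q.primeCompl (TensorProduct A R (FrobAlg p 1 A))) ∧
      Module.finrank (Localization q.primeCompl)
          (LocalizedModule q.primeCompl (TensorProduct A R (FrobAlg p 1 A))) =
        pDeg p 1 (FractionRing A) :=
  stmt7_general p A R q hq
end
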